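/- Let p, q ∈ ℝ³ \ {0} and let ω ∈ S² be a unit vector, with post-collision momenta p', q' defined by the stated parametrization. Then the relative momentum is a collision invariant: |p'||q'| − p'·q' = |p||q| − p·q, i.e. ρ(p',q') = ρ(p,q). -/

import Mathlib

noncomputable section

open MeasureTheory Real Metric
open scoped RealInnerProductSpace

/-- Momentum space `ℝ³`. -/
abbrev R3 : Type := EuclideanSpace ℝ (Fin 3)

/-- The relative momentum `ρ(p,q) = √(2(|p||q| − p·q))`. -/
def relMom (p q : R3) : ℝ := Real.sqrt (2 * (‖p‖ * ‖q‖ - ⟪p, q⟫))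

/-- Post-collision momentum `p'`. -/
def pPost (p q ω : R3) : R3 :=
  (1 / 2 : ℝ) • (p + q) + (relMom p q / 2) • ω
    + (⟪p + q, ω⟫ / 2 / (‖p‖ + ‖q‖ + relMom p q)) • (p + q)

/-- Post-collision momentum `q'`. -/
def qPost (p q ω : R3) : R3 :=
  (1 / 2 : ℝ) • (p + q) - (relMom p q / 2) • ω
    - (⟪p + q, ω⟫ / 2 / (‖p‖ + ‖q‖ + relMom p q)) • (p + q)

/-- Post-collision energy `p'⁰`. -/
def p0Post (p q ω : R3) : ℝ := (‖p‖ + ‖q‖) / 2 + ⟪p + q, ω⟫ / 2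

/-- Post-collision energy `q'⁰`. -/
def q0Post (p q ω : R3) : ℝ := (‖p‖ + ‖q‖) / 2 - ⟪p + q, ω⟫ / 2

/-- The surface measure `dω` on the unit sphere `S² ⊂ ℝ³` (total mass `4π`). -/
def sphMeasure : Measure (sphere (0 : R3) 1) := (volume : Measure R3).toSphere

/-- The (modified, for `ε > 0`) massless Boltzmann collision operator with scattering
cross-section `σ = C₁ h^{-b}`. -/
def Qcoll (C₁ b ε : ℝ) (f : R3 → ℝ) (p : R3) : ℝ :=
  C₁ * ∫ q : R3, ∫ ω : sphere (0 : R3) 1,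
      (if ε ≤ relMom p q then relMom p q ^ (2 - b) / (‖p‖ * ‖q‖) else 0)
        * (f (pPost p q ω) * f (qPost p q ω) - f p * f q) ∂sphMeasure

/-! With `P = p + q`, `s = |p| + |q|` and `a = P·ω`, Cauchy–Schwarz turns the definition of `ρ`
into `|P|² = (s − ρ)(s + ρ)`, and this factor `s + ρ` cancels the denominator in `p'`. Expanding
gives `⟪p', P⟫ = (|P|² + s a)/2` and `|p'|² = ((s + a)/2)²`; since `q' = P − p'`, also
`|q'|² = ((s − a)/2)²`. Thus `|p'| = p'⁰`, `|q'| = q'⁰` and `p'·q' = p'⁰ q'⁰ − ρ²/2`,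
which is the claim. -/

lemma relMom_sq (p q : R3) : relMom p q ^ 2 = 2 * (‖p‖ * ‖q‖ - ⟪p, q⟫) :=
  Real.sq_sqrt (by linarith [real_inner_le_norm p q])

lemma norm_add_sq_eq_sub_relMom_sq (p q : R3) :
    ‖p + q‖ ^ 2 = (‖p‖ + ‖q‖) ^ 2 - relMom p q ^ 2 := by
  rw [relMom_sq, norm_add_sq_real]
  ring

lemma abs_inner_add_le_norm_add_norm (p q : R3) {ω : R3} (hω : ‖ω‖ = 1) :
    |⟪p + q, ω⟫| ≤ ‖p‖ + ‖q‖ :=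
  calc |⟪p + q, ω⟫| ≤ ‖p + q‖ * ‖ω‖ := abs_real_inner_le_norm _ _
    _ ≤ ‖p‖ + ‖q‖ := by rw [hω, mul_one]; exact norm_add_le p q

lemma norm_add_norm_add_relMom_pos {p : R3} (hp : p ≠ 0) (q : R3) :
    0 < ‖p‖ + ‖q‖ + relMom p q := by
  have := norm_pos_iff.mpr hp
  unfold relMom
  positivity

lemma qPost_eq_sub_pPost (p q ω : R3) : qPost p q ω = p + q - pPost p q ω := by
  simp only [pPost, qPost]
  module

section PostCollision

variable {p q ω : R3} (hp : p ≠ 0) (hω : ‖ω‖ = 1)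
include hp

lemma inner_pPost_add :
    ⟪pPost p q ω, p + q⟫ = (‖p + q‖ ^ 2 + (‖p‖ + ‖q‖) * ⟪p + q, ω⟫) / 2 := by
  have hpos := norm_add_norm_add_relMom_pos hp q
  have hP := norm_add_sq_eq_sub_relMom_sq p q
  unfold pPost
  set P := p + q
  simp only [inner_add_left, real_inner_smul_left, real_inner_self_eq_norm_sq,
    real_inner_comm ω P]
  field_simp
  rw [hP]
  ring

include hω

lemma norm_pPost_sq : ‖pPost p q ω‖ ^ 2 = p0Post p q ω ^ 2 := by
  have hpos := norm_add_norm_add_relMom_pos hp q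
  have hP := norm_add_sq_eq_sub_relMom_sq p q
  rw [← real_inner_self_eq_norm_sq]
  unfold pPost p0Post
  set P := p + q
  simp only [inner_add_left, inner_add_right, real_inner_smul_left, real_inner_smul_right,
    real_inner_self_eq_norm_sq P, real_inner_self_eq_norm_sq ω, real_inner_comm ω P, hω]
  field_simp
  rw [hP]
  ring

lemma norm_pPost : ‖pPost p q ω‖ = p0Post p q ω := by
  have hp0 : 0 ≤ p0Post p q ω := by
    unfold p0Post
    linarith [neg_abs_le ⟪p + q, ω⟫, abs_inner_add_le_norm_add_norm p q hω]
  exact (pow_left_inj₀ (norm_nonneg _) hp0 two_ne_zero).mp (norm_pPost_sq hp hω)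

lemma norm_qPost : ‖qPost p q ω‖ = q0Post p q ω := by
  have hq0 : 0 ≤ q0Post p q ω := by
    unfold q0Post
    linarith [le_abs_self ⟪p + q, ω⟫, abs_inner_add_le_norm_add_norm p q hω]
  have hsq : ‖qPost p q ω‖ ^ 2 = q0Post p q ω ^ 2 := by
    rw [qPost_eq_sub_pPost, norm_sub_sq_real, real_inner_comm,
      inner_pPost_add hp, norm_pPost_sq hp hω, p0Post, q0Post]
    ring
  exact (pow_left_inj₀ (norm_nonneg _) hq0 two_ne_zero).mp hsq

lemma inner_pPost_qPost :
    ⟪pPost p q ω, qPost p q ω⟫ = p0Post p q ω * q0Post p q ω - relMom p q ^ 2 / 2 := by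
  rw [qPost_eq_sub_pPost, inner_sub_right, inner_pPost_add hp,
    real_inner_self_eq_norm_sq, norm_pPost_sq hp hω, norm_add_sq_eq_sub_relMom_sq, p0Post, q0Post]
  ring

end PostCollision

theorem relMom_collision_invariant_general (p q ω : R3) (hp : p ≠ 0) (hω : ‖ω‖ = 1) :
    ‖pPost p q ω‖ * ‖qPost p q ω‖ - ⟪pPost p q ω, qPost p q ω⟫ = ‖p‖ * ‖q‖ - ⟪p, q⟫ ∧
    relMom (pPost p q ω) (qPost p q ω) = relMom p q := by
  have key : ‖pPost p q ω‖ * ‖qPost p q ω‖ - ⟪pPost p q ω, qPost p q ω⟫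
      = ‖p‖ * ‖q‖ - ⟪p, q⟫ := by
    rw [norm_pPost hp hω, norm_qPost hp hω, inner_pPost_qPost hp hω, relMom_sq]
    ring
  exact ⟨key, by rw [relMom, key, relMom]⟩

/-- The relative momentum is a collision invariant:
`|p'||q'| − p'·q' = |p||q| − p·q`, i.e. `ρ(p',q') = ρ(p,q)`. -/
theorem relMom_collision_invariant (p q ω : R3) (hp : p ≠ 0) (hq : q ≠ 0) (hω : ‖ω‖ = 1) :
    ‖pPost p q ω‖ * ‖qPost p q ω‖ - ⟪pPost p q ω, qPost p q ω⟫ = ‖p‖ * ‖q‖ - ⟪p, q⟫ ∧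
    relMom (pPost p q ω) (qPost p q ω) = relMom p q :=
  relMom_collision_invariant_general p q ω hp hω
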